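/- Let φ : C*_p(X) → C*_p(Y) be a uniformly continuous surjection with Y pseudocompact. For every open U ⊆ βX, the set K^{-1}(U) = { y ∈ βY : K(y) ∩ U ≠ ∅ } is a Gδ-subset of βY. -/

import Mathlib

open scoped ENNReal Uniformity Topology

/-- `C*(X)`: bounded continuous real-valued functions on `X`; as a subtype of `X → ℝ` it
inherits the uniformity (and topology) of pointwise convergence, giving `C*_p(X)`. -/
abbrev Cstar (X : Type*) [TopologicalSpace X] : Type _ :=
  {f : X → ℝ // Continuous f ∧ ∃ M : ℝ, ∀ x, |f x| ≤ M}

/-- Given extension operators `eX`, `eY` to the Čech–Stone compactifications and a map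
`φ : C*(X) → C*(Y)`, `aFn eX eY φ y K` is
`sup { |φ(f)~(y) − φ(g)~(y)| : f, g ∈ C*(X), |f~ − g~| < 1 on K }` (valued in `ℝ≥0∞`). -/
noncomputable def aFn {X Y : Type*} [TopologicalSpace X] [TopologicalSpace Y]
    (eX : Cstar X → C(StoneCech X, ℝ)) (eY : Cstar Y → C(StoneCech Y, ℝ))
    (φ : Cstar X → Cstar Y) (y : StoneCech Y) (K : Set (StoneCech X)) : ℝ≥0∞ :=
  ⨆ (p : Cstar X × Cstar X) (_ : ∀ x ∈ K, |eX p.1 x - eX p.2 x| < 1),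
    ENNReal.ofReal |eY (φ p.1) y - eY (φ p.2) y|

section Aux

variable {X Y : Type*} [TopologicalSpace X] [T35Space X] [TopologicalSpace Y] [T35Space Y]

/-- Restriction of a continuous function on `βX` to an element of `C*(X)`. -/
noncomputable def restr (W : C(StoneCech X, ℝ)) : Cstar X := by
  refine ⟨fun x => W (stoneCechUnit x), W.continuous.comp continuous_stoneCechUnit, ?_⟩
  rcases isEmpty_or_nonempty (StoneCech X) with h | h
  · exact ⟨0, fun x => (h.elim (stoneCechUnit x))⟩
  · obtain ⟨z₀, -, hz₀⟩ := isCompact_univ.exists_isMaxOn (Set.univ_nonempty)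
      ((continuous_abs.comp W.continuous).continuousOn (s := Set.univ))
    exact ⟨|W z₀|, fun x => hz₀ (Set.mem_univ _)⟩

variable (eX : Cstar X → C(StoneCech X, ℝ)) (eY : Cstar Y → C(StoneCech Y, ℝ))
variable (φ : Cstar X → Cstar Y)

theorem eX_restr (heX : ∀ f x, eX f (stoneCechUnit x) = f.1 x) (W : C(StoneCech X, ℝ)) :
    eX (restr W) = W := by
  have : (eX (restr W) : StoneCech X → ℝ) = W :=
    denseRange_stoneCechUnit.equalizer (eX (restr W)).continuous W.continuous
      (funext fun x => heX (restr W) x)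
  exact ContinuousMap.ext fun z => congrFun this z

theorem aFn_anti {q : StoneCech Y} {K L : Set (StoneCech X)} (h : K ⊆ L) :
    aFn eX eY φ q L ≤ aFn eX eY φ q K := by
  refine iSup_le fun p => iSup_le fun hp => ?_
  exact le_iSup_of_le p (le_iSup_of_le (fun x hx => hp x (h hx)) le_rfl)

theorem le_aFn {q : StoneCech Y} {K : Set (StoneCech X)} {f g : Cstar X}
    (h : ∀ z ∈ K, |eX f z - eX g z| < 1) :
    ENNReal.ofReal |eY (φ f) q - eY (φ g) q| ≤ aFn eX eY φ q K :=
  le_iSup_of_le (f, g) (le_iSup_of_le h le_rfl)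

theorem abs_le_of_aFn {q : StoneCech Y} {K : Set (StoneCech X)} {f g : Cstar X}
    (hK : aFn eX eY φ q K ≠ ⊤) (h : ∀ z ∈ K, |eX f z - eX g z| < 1) :
    |eY (φ f) q - eY (φ g) q| ≤ (aFn eX eY φ q K).toReal := by
  exact (ENNReal.ofReal_le_iff_le_toReal hK).1 (le_aFn eX eY φ (q := q) h)

theorem exists_pair_gt {q : StoneCech Y} {K : Set (StoneCech X)}
    (hK : aFn eX eY φ q K = ⊤) (b : ℝ) :
    ∃ f g : Cstar X, (∀ z ∈ K, |eX f z - eX g z| < 1) ∧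
      b < |eY (φ f) q - eY (φ g) q| := by
  have h : ENNReal.ofReal (max b 0) < aFn eX eY φ q K := by
    rw [hK]; exact ENNReal.ofReal_lt_top
  rw [aFn, lt_iSup_iff] at h
  obtain ⟨p, hp⟩ := h
  by_cases hadm : ∀ x ∈ K, |eX p.1 x - eX p.2 x| < 1
  · refine ⟨p.1, p.2, hadm, ?_⟩
    rw [iSup_pos hadm] at hp
    have := (ENNReal.ofReal_lt_ofReal_iff_of_nonneg (le_max_right b 0)).1 hp
    exact lt_of_le_of_lt (le_max_left b 0) this
  · rw [iSup_neg hadm] at hp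
    exact absurd hp (by simp)

theorem subadd (heX : ∀ f x, eX f (stoneCechUnit x) = f.1 x)
    {q : StoneCech Y} {K L : Set (StoneCech X)} (hK : IsClosed K) (hL : IsClosed L) :
    aFn eX eY φ q (K ∩ L) ≤ aFn eX eY φ q K + aFn eX eY φ q L := by
  refine iSup_le fun p => iSup_le fun hp => ?_
  set F := eX p.1 with hF
  set G := eX p.2 with hG
  have hAopen : IsOpen {z : StoneCech X | |F z - G z| < 1} :=
    isOpen_lt (by continuity) continuous_const
  have hdisj : Disjoint (L ∩ {z : StoneCech X | |F z - G z| < 1}ᶜ)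
      (K ∩ {z : StoneCech X | |F z - G z| < 1}ᶜ) := by
    rw [Set.disjoint_left]
    rintro z ⟨hzL, hzA⟩ ⟨hzK, -⟩
    exact hzA (hp z ⟨hzK, hzL⟩)
  obtain ⟨χ, hχ0, hχ1, hχ01⟩ := exists_continuous_zero_one_of_isClosed
    (hL.inter hAopen.isClosed_compl) (hK.inter hAopen.isClosed_compl) hdisj
  set Wc : C(StoneCech X, ℝ) := ⟨fun z => G z + χ z * (F z - G z), by continuity⟩ with hWc
  set w : Cstar X := restr Wc with hwdef
  have hw : eX w = Wc := eX_restr eX heX Wc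
  have hadm1 : ∀ z ∈ K, |eX p.1 z - eX w z| < 1 := by
    intro z hz
    rw [hw]
    have : F z - Wc z = (1 - χ z) * (F z - G z) := by
      simp only [hWc, ContinuousMap.coe_mk]; ring
    rw [← hF, this]
    by_cases hzA : |F z - G z| < 1
    · have h01 := hχ01 z
      calc |(1 - χ z) * (F z - G z)| = |1 - χ z| * |F z - G z| := abs_mul _ _
        _ ≤ 1 * |F z - G z| := by
            refine mul_le_mul_of_nonneg_right ?_ (abs_nonneg _)
            rw [abs_le]; constructor <;> [linarith [h01.2]; linarith [h01.1]]
        _ = |F z - G z| := one_mul _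
        _ < 1 := hzA
    · have : χ z = 1 := hχ1 ⟨hz, hzA⟩
      rw [this]; simpa using one_pos
  have hadm2 : ∀ z ∈ L, |eX w z - eX p.2 z| < 1 := by
    intro z hz
    rw [hw]
    have : Wc z - G z = χ z * (F z - G z) := by
      simp only [hWc, ContinuousMap.coe_mk]; ring
    rw [← hG, this]
    by_cases hzA : |F z - G z| < 1
    · have h01 := hχ01 z
      calc |χ z * (F z - G z)| = |χ z| * |F z - G z| := abs_mul _ _
        _ ≤ 1 * |F z - G z| := by
            refine mul_le_mul_of_nonneg_right ?_ (abs_nonneg _)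
            rw [abs_le]; constructor <;> [linarith [h01.1]; linarith [h01.2]]
        _ = |F z - G z| := one_mul _
        _ < 1 := hzA
    · have : χ z = 0 := hχ0 ⟨hz, hzA⟩
      rw [this]; simpa using one_pos
  calc ENNReal.ofReal |eY (φ p.1) q - eY (φ p.2) q|
      ≤ ENNReal.ofReal (|eY (φ p.1) q - eY (φ w) q| + |eY (φ w) q - eY (φ p.2) q|) :=
        ENNReal.ofReal_le_ofReal (abs_sub_le _ _ _)
    _ ≤ ENNReal.ofReal |eY (φ p.1) q - eY (φ w) q|
        + ENNReal.ofReal |eY (φ w) q - eY (φ p.2) q| := ENNReal.ofReal_add_le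
    _ ≤ aFn eX eY φ q K + aFn eX eY φ q L :=
        add_le_add (le_aFn eX eY φ (q := q) hadm1) (le_aFn eX eY φ (q := q) hadm2)

/-- Pseudocompactness: `Y` is Gδ-dense in `βY`. -/
theorem gdelta_dense (hYpc : ∀ f : Y → ℝ, Continuous f → ∃ M : ℝ, ∀ y, |f y| ≤ M)
    {G : Set (StoneCech Y)} (hG : IsGδ G) (hne : G.Nonempty) :
    ∃ y₀ : Y, stoneCechUnit y₀ ∈ G := by
  obtain ⟨V, hVopen, rfl⟩ := hG.eq_iInter_nat
  obtain ⟨q, hq⟩ := hne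
  rcases isEmpty_or_nonempty Y with hY | hY
  · exfalso
    have hq' : q ∈ closure (Set.range (stoneCechUnit : Y → StoneCech Y)) := by
      rw [denseRange_stoneCechUnit.closure_eq]; trivial
    rw [Set.range_eq_empty, closure_empty] at hq'
    exact hq'
  by_contra hcon
  push_neg at hcon
  have hqV : ∀ n, q ∈ V n := fun n => Set.mem_iInter.1 hq n
  have hdisj : ∀ n, Disjoint ((V n)ᶜ) ({q} : Set (StoneCech Y)) := by
    intro n
    rw [Set.disjoint_left]
    intro z hz hz2
    rw [Set.mem_singleton_iff] at hz2
    subst hz2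
    exact hz (hqV n)
  choose h hs ht h01 using fun n => exists_continuous_zero_one_of_isClosed
    ((hVopen n).isClosed_compl) isClosed_singleton (hdisj n)
  set u : ℕ → ℝ := fun n => (1/2 : ℝ)^(n+1) with hu_def
  have hu : Summable u := by
    have : Summable (fun n : ℕ => (1/2 : ℝ)^n * (1/2)) := summable_geometric_two.mul_right _
    refine this.congr fun n => ?_
    rw [hu_def]; ring
  have hupos : ∀ n, 0 < u n := fun n => pow_pos (by norm_num) _
  set f : StoneCech Y → ℝ := fun z => ∑' n, u n * h n z with hf_def
  have hcont : Continuous f := by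
    refine continuous_tsum (fun n => by continuity) hu (fun n z => ?_)
    rw [Real.norm_eq_abs, abs_mul, abs_of_nonneg (le_of_lt (hupos n))]
    have h01' := h01 n z
    calc u n * |h n z| ≤ u n * 1 := by
          refine mul_le_mul_of_nonneg_left ?_ (le_of_lt (hupos n))
          rw [abs_le]; exact ⟨by linarith [h01'.1], h01'.2⟩
      _ = u n := mul_one _
  set c : ℝ := ∑' n, u n with hc_def
  have hfq : f q = c := by
    rw [hf_def, hc_def]
    refine tsum_congr fun n => ?_
    have : h n q = 1 := ht n rfl
    rw [this, mul_one]
  have hterm_nonneg : ∀ (z : StoneCech Y) (n : ℕ), 0 ≤ u n * h n z := fun z n =>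
    mul_nonneg (le_of_lt (hupos n)) (h01 n z).1
  have hterm_le : ∀ (z : StoneCech Y) (n : ℕ), u n * h n z ≤ u n := fun z n => by
    calc u n * h n z ≤ u n * 1 :=
        mul_le_mul_of_nonneg_left (h01 n z).2 (le_of_lt (hupos n))
      _ = u n := mul_one _
  have hflt : ∀ y₀ : Y, f (stoneCechUnit y₀) < c := by
    intro y₀
    have : stoneCechUnit y₀ ∉ ⋂ n, V n := hcon y₀
    rw [Set.mem_iInter] at this
    push_neg at this
    obtain ⟨n, hn⟩ := this
    have hzero : h n (stoneCechUnit y₀) = 0 := hs n hn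
    refine Summable.tsum_lt_tsum_of_nonneg (i := n) (hterm_nonneg _) (hterm_le _) ?_ hu
    rw [hzero, mul_zero]
    exact hupos n
  have hgcont : Continuous (fun y : Y => 1 / (c - f (stoneCechUnit y))) := by
    refine Continuous.div continuous_const
      (continuous_const.sub (hcont.comp continuous_stoneCechUnit)) fun y => ?_
    exact (sub_pos.2 (hflt y)).ne'
  obtain ⟨M, hM⟩ := hYpc _ hgcont
  have hMpos : 0 < M := by
    obtain ⟨y1⟩ := hY
    have h1 : 0 < 1 / (c - f (stoneCechUnit y1)) := one_div_pos.2 (sub_pos.2 (hflt y1))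
    have := hM y1
    calc (0:ℝ) < 1 / (c - f (stoneCechUnit y1)) := h1
      _ ≤ |1 / (c - f (stoneCechUnit y1))| := le_abs_self _
      _ ≤ M := this
  have hkey : ∀ y : Y, f (stoneCechUnit y) ≤ c - 1 / M := by
    intro y
    have hpos : 0 < c - f (stoneCechUnit y) := sub_pos.2 (hflt y)
    have h2 : 1 / (c - f (stoneCechUnit y)) ≤ M :=
      le_trans (le_abs_self _) (hM y)
    have h3 : 1 ≤ M * (c - f (stoneCechUnit y)) := by
      rw [div_le_iff₀ hpos] at h2; linarith
    have h4 : 1 / M ≤ c - f (stoneCechUnit y) := by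
      rw [div_le_iff₀ hMpos]; linarith
    linarith
  have hclosed : IsClosed {z : StoneCech Y | f z ≤ c - 1 / M} :=
    isClosed_le hcont continuous_const
  have hsub : Set.range (stoneCechUnit : Y → StoneCech Y) ⊆
      {z : StoneCech Y | f z ≤ c - 1 / M} := by
    rintro - ⟨y, rfl⟩
    exact hkey y
  have hquniv : q ∈ closure (Set.range (stoneCechUnit : Y → StoneCech Y)) := by
    rw [denseRange_stoneCechUnit.closure_eq]; trivial
  have : q ∈ {z : StoneCech Y | f z ≤ c - 1 / M} :=
    (hclosed.closure_subset_iff.2 hsub) hquniv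
  rw [Set.mem_setOf_eq, hfq] at this
  have hM' : (0:ℝ) < 1 / M := one_div_pos.2 hMpos
  linarith

/-- Uniform continuity at a point of `Y`. -/
theorem uc_point (hφ : UniformContinuous φ) (y₀ : Y) :
    ∃ (F : Finset X) (δ : ℝ), 0 < δ ∧ ∀ f g : Cstar X,
      (∀ x ∈ F, |f.1 x - g.1 x| < δ) → |(φ f).1 y₀ - (φ g).1 y₀| < 1 := by
  classical
  -- the entourage on the `Y` side
  have hSY : {pp : (Y → ℝ) × (Y → ℝ) | |pp.1 y₀ - pp.2 y₀| < 1} ∈ 𝓤 (Y → ℝ) := by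
    rw [Pi.uniformity]
    refine Filter.mem_iInf_of_mem y₀ ?_
    refine Filter.mem_comap.2 ⟨{p : ℝ × ℝ | dist p.1 p.2 < 1}, Metric.dist_mem_uniformity one_pos, ?_⟩
    intro pp hpp
    simpa [Real.dist_eq] using hpp
  have hEY : {pp : Cstar Y × Cstar Y | |pp.1.1 y₀ - pp.2.1 y₀| < 1} ∈ 𝓤 (Cstar Y) := by
    rw [uniformity_subtype]
    exact Filter.preimage_mem_comap hSY
  have hpre : {pp : Cstar X × Cstar X | |(φ pp.1).1 y₀ - (φ pp.2).1 y₀| < 1}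
      ∈ 𝓤 (Cstar X) := by
    have := hφ hEY
    rwa [Filter.mem_map] at this
  rw [uniformity_subtype] at hpre
  obtain ⟨SX, hSX, hSXsub⟩ := Filter.mem_comap.1 hpre
  rw [Pi.uniformity, Filter.mem_iInf] at hSX
  obtain ⟨I, hIfin, Vs, hVs, rfl⟩ := hSX
  have hVs' : ∀ i : I, ∃ E ∈ 𝓤 ℝ, (fun a : (X → ℝ) × (X → ℝ) => (a.1 i, a.2 i)) ⁻¹' E ⊆ Vs i :=
    fun i => Filter.mem_comap.1 (hVs i)
  choose E hE hEsub using hVs'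
  have hdelta : ∀ i : I, ∃ δ > 0, ∀ {a b : ℝ}, dist a b < δ → (a, b) ∈ E i := fun i =>
    Metric.mem_uniformity_dist.1 (hE i)
  choose δ hδpos hδsub using hdelta
  haveI := hIfin.fintype
  obtain ⟨δ0, hδ0pos, hδ0le⟩ : ∃ δ0 > 0, ∀ i : I, δ0 ≤ δ i := by
    rcases isEmpty_or_nonempty I with hI | hI
    · exact ⟨1, one_pos, fun i => hI.elim i⟩
    · refine ⟨Finset.univ.inf' (Finset.univ_nonempty) δ, ?_, fun i => ?_⟩
      · exact (Finset.lt_inf'_iff _).2 fun i _ => hδpos i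
      · exact Finset.inf'_le _ (Finset.mem_univ i)
  refine ⟨hIfin.toFinset, δ0, hδ0pos, fun f g hfg => ?_⟩
  have hmem : (f.1, g.1) ∈ ⋂ i : I, Vs i := by
    refine Set.mem_iInter.2 fun i => ?_
    refine hEsub i ?_
    refine hδsub i ?_
    rw [Real.dist_eq]
    exact lt_of_lt_of_le (hfg i.1 (hIfin.mem_toFinset.2 i.2)) (hδ0le i)
  exact hSXsub (show (f, g) ∈ (fun q : Cstar X × Cstar X => ((q.1 : X → ℝ), (q.2 : X → ℝ))) ⁻¹' (⋂ i : I, Vs i) from hmem)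

/-- Chain bound. -/
theorem chain_bound (y₀ : Y) (F : Finset X) (δ : ℝ) (hδ : 0 < δ)
    (huc : ∀ f g : Cstar X, (∀ x ∈ F, |f.1 x - g.1 x| < δ) →
      |(φ f).1 y₀ - (φ g).1 y₀| < 1)
    (N : ℕ) (hN : 0 < N) (hNδ : 1 / (N : ℝ) < δ)
    (f g : Cstar X) (hfg : ∀ x : X, |f.1 x - g.1 x| ≤ 1) :
    |(φ f).1 y₀ - (φ g).1 y₀| ≤ N := by
  obtain ⟨Mf, hMf⟩ := f.2.2
  obtain ⟨Mg, hMg⟩ := g.2.2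
  have hNpos : (0:ℝ) < N := Nat.cast_pos.2 hN
  set h : ℕ → Cstar X := fun i =>
    ⟨fun x => g.1 x + ((i : ℝ)/N) * (f.1 x - g.1 x),
     g.2.1.add (continuous_const.mul (f.2.1.sub g.2.1)),
     Mg + |(i:ℝ)/N| * (Mf + Mg), fun x => by
       calc |g.1 x + ((i : ℝ)/N) * (f.1 x - g.1 x)|
           ≤ |g.1 x| + |((i : ℝ)/N) * (f.1 x - g.1 x)| := abs_add_le _ _
         _ = |g.1 x| + |(i:ℝ)/N| * |f.1 x - g.1 x| := by rw [abs_mul]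
         _ ≤ Mg + |(i:ℝ)/N| * (Mf + Mg) := by
             refine add_le_add (hMg x) (mul_le_mul_of_nonneg_left ?_ (abs_nonneg _))
             calc |f.1 x - g.1 x| ≤ |f.1 x| + |g.1 x| := abs_sub _ _
               _ ≤ Mf + Mg := add_le_add (hMf x) (hMg x)⟩ with hh
  set ψ : ℕ → ℝ := fun i => (φ (h i)).1 y₀ with hψ
  have hstep : ∀ i : ℕ, |ψ (i+1) - ψ i| < 1 := by
    intro i
    refine huc (h (i+1)) (h i) fun x _ => ?_
    have hdiff : (h (i+1)).1 x - (h i).1 x = (f.1 x - g.1 x) / N := by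
      simp only [hh]
      push_cast
      field_simp
      ring
    rw [hdiff, abs_div, abs_of_pos hNpos]
    calc |f.1 x - g.1 x| / N ≤ 1 / N := by gcongr; exact hfg x
      _ < δ := hNδ
  have key : ∀ i : ℕ, |ψ i - ψ 0| ≤ i := by
    intro i
    induction i with
    | zero => simp
    | succ i ih =>
      have := hstep i
      have habs : |ψ (i+1) - ψ 0| ≤ |ψ (i+1) - ψ i| + |ψ i - ψ 0| := abs_sub_le _ _ _
      push_cast
      push_cast at ih
      linarith
  have h0 : h 0 = g := by
    refine Subtype.ext (funext fun x => ?_)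
    simp [hh]
  have hNf : h N = f := by
    refine Subtype.ext (funext fun x => ?_)
    simp only [hh]
    field_simp
    ring
  have hfinal := key N
  simp only [hψ] at hfinal
  rw [h0, hNf] at hfinal
  exact hfinal

/-- Lemma A : `a(q, βX) < ∞` for every `q ∈ βY`. -/
theorem lemmaA (hφ : UniformContinuous φ)
    (heX : ∀ f x, eX f (stoneCechUnit x) = f.1 x)
    (heY : ∀ g y, eY g (stoneCechUnit y) = g.1 y)
    (hYpc : ∀ f : Y → ℝ, Continuous f → ∃ M : ℝ, ∀ y, |f y| ≤ M)
    (q : StoneCech Y) : aFn eX eY φ q Set.univ ≠ ⊤ := by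
  intro htop
  have hpairs : ∀ j : ℕ, ∃ f g : Cstar X, (∀ z ∈ (Set.univ : Set (StoneCech X)),
      |eX f z - eX g z| < 1) ∧ (j:ℝ) < |eY (φ f) q - eY (φ g) q| :=
    fun j => exists_pair_gt eX eY φ htop j
  choose pf pg hadm hbig using hpairs
  set A := ⋂ j : ℕ, {q' : StoneCech Y |
    (j:ℝ) < |eY (φ (pf j)) q' - eY (φ (pg j)) q'|} with hA
  have hAgδ : IsGδ A := IsGδ.iInter_of_isOpen fun j =>
    isOpen_lt continuous_const (by continuity)
  have hqA : q ∈ A := Set.mem_iInter.2 fun j => hbig j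
  obtain ⟨y₀, hy₀⟩ := gdelta_dense hYpc hAgδ ⟨q, hqA⟩
  obtain ⟨F, δ, hδ, huc⟩ := uc_point φ hφ y₀
  obtain ⟨N, hN⟩ := exists_nat_gt (1/δ)
  have hNposR : (0:ℝ) < N := lt_trans (one_div_pos.2 hδ) hN
  have hNpos : 0 < N := Nat.cast_pos.1 hNposR
  have hNδ : 1/(N:ℝ) < δ := by
    rw [div_lt_iff₀ hNposR]
    rw [div_lt_iff₀ hδ] at hN
    linarith
  have hfg : ∀ x : X, |(pf (N+1)).1 x - (pg (N+1)).1 x| ≤ 1 := by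
    intro x
    have := hadm (N+1) (stoneCechUnit x) trivial
    rw [heX, heX] at this
    exact le_of_lt this
  have hbound := chain_bound φ y₀ F δ hδ huc N hNpos hNδ (pf (N+1)) (pg (N+1)) hfg
  have h1 : ((N+1 : ℕ):ℝ) < |eY (φ (pf (N+1))) (stoneCechUnit y₀)
      - eY (φ (pg (N+1))) (stoneCechUnit y₀)| := Set.mem_iInter.1 hy₀ (N+1)
  rw [heY, heY] at h1
  push_cast at h1
  linarith

/-- Main lemma: if `a(q, Uᶜ) = ∞` then `U` contains an essential point for `q`. -/
theorem exists_essential (hφ : UniformContinuous φ)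
    (heX : ∀ f x, eX f (stoneCechUnit x) = f.1 x)
    (heY : ∀ g y, eY g (stoneCechUnit y) = g.1 y)
    (hYpc : ∀ f : Y → ℝ, Continuous f → ∃ M : ℝ, ∀ y, |f y| ≤ M)
    {U : Set (StoneCech X)} (hU : IsOpen U) (q : StoneCech Y)
    (htop : aFn eX eY φ q Uᶜ = ⊤) :
    ∃ x ∈ U, ∀ W : Set (StoneCech X), IsOpen W → x ∈ W → aFn eX eY φ q Wᶜ = ⊤ := by
  classical
  by_contra hcon
  push_neg at hcon
  -- Shrink the witnessing neighbourhoods.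
  have hshrink : ∀ x : U, ∃ V : Set (StoneCech X), IsOpen V ∧ (x : StoneCech X) ∈ V ∧
      closure V ⊆ U ∧ aFn eX eY φ q Vᶜ ≠ ⊤ := by
    rintro ⟨x, hx⟩
    obtain ⟨W, hWo, hxW, hWfin⟩ := hcon x hx
    have hdisj : Disjoint ((U ∩ W)ᶜ) ({x} : Set (StoneCech X)) := by
      rw [Set.disjoint_left]
      intro z hz hz2
      rw [Set.mem_singleton_iff] at hz2
      subst hz2
      exact hz ⟨hx, hxW⟩
    obtain ⟨χ, hχ0, hχ1, hχ01⟩ := exists_continuous_zero_one_of_isClosed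
      (hU.inter hWo).isClosed_compl isClosed_singleton hdisj
    have hVsub : {z : StoneCech X | 1/2 < χ z} ⊆ U ∩ W := by
      intro z hz
      by_contra hzUW
      have : χ z = 0 := hχ0 hzUW
      rw [Set.mem_setOf_eq, this] at hz
      norm_num at hz
    refine ⟨{z | 1/2 < χ z}, isOpen_lt continuous_const χ.continuous, ?_, ?_, ?_⟩
    · have : χ x = 1 := hχ1 rfl
      rw [Set.mem_setOf_eq, this]; norm_num
    · have hcl : closure {z : StoneCech X | 1/2 < χ z} ⊆ {z | 1/2 ≤ χ z} := by
        refine closure_minimal ?_ (isClosed_le continuous_const χ.continuous)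
        intro z hz
        simp only [Set.mem_setOf_eq] at hz ⊢
        exact le_of_lt hz
      refine hcl.trans fun z hz => ?_
      by_contra hzUW'
      by_cases hzUW : z ∈ U ∩ W
      · exact hzUW' hzUW.1
      · have : χ z = 0 := hχ0 hzUW
        rw [Set.mem_setOf_eq, this] at hz
        norm_num at hz
    · have hWV : Wᶜ ⊆ {z : StoneCech X | 1/2 < χ z}ᶜ := by
        intro z hz hzV
        exact hz (hVsub hzV).2
      exact fun htop' => hWfin (top_le_iff.1 (htop' ▸ aFn_anti eX eY φ hWV))
  choose Vx hVo hVmem hVcl hVfin using hshrink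
  -- invariant for the recursive construction
  set Pk : Set (StoneCech X) → Prop := fun G =>
    IsOpen G ∧ closure G ⊆ U ∧ aFn eX eY φ q Gᶜ ≠ ⊤ with hPk
  -- covering lemma
  have cover : ∀ P : Set (StoneCech X), IsCompact P → P ⊆ U →
      ∃ G : Set (StoneCech X), Pk G ∧ P ⊆ G := by
    intro P hP hPU
    obtain ⟨t, ht⟩ := hP.elim_finite_subcover Vx hVo
      (fun z hz => Set.mem_iUnion.2 ⟨⟨z, hPU hz⟩, hVmem _⟩)
    have hmain : ∀ s : Finset U, IsClosed (⋂ x ∈ s, (Vx x)ᶜ) ∧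
        aFn eX eY φ q (⋂ x ∈ s, (Vx x)ᶜ) ≠ ⊤ := by
      intro s
      induction s using Finset.induction_on with
      | empty =>
        simp only [Finset.notMem_empty, Set.iInter_of_empty, Set.iInter_univ]
        exact ⟨isClosed_univ, lemmaA eX eY φ hφ heX heY hYpc q⟩
      | @insert a s ha ih =>
        rw [Finset.set_biInter_insert]
        refine ⟨((hVo a).isClosed_compl).inter ih.1, ?_⟩
        have hsub := subadd eX eY φ heX (q := q) ((hVo a).isClosed_compl) ih.1
        exact fun htop' => (ENNReal.add_ne_top.2 ⟨hVfin a, ih.2⟩) (top_le_iff.1 (htop' ▸ hsub))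
    refine ⟨⋃ x ∈ t, Vx x, ⟨isOpen_biUnion fun x _ => hVo x, ?_, ?_⟩, ht⟩
    · rw [t.closure_biUnion]
      exact Set.iUnion₂_subset fun x _ => hVcl x
    · have hcompl : (⋃ x ∈ t, Vx x)ᶜ = ⋂ x ∈ t, (Vx x)ᶜ := by
        simp [Set.compl_iUnion]
      rw [hcompl]
      exact (hmain t).2
  -- one step of the construction
  have step : ∀ G : Set (StoneCech X), Pk G →
      ∀ j : ℕ, ∃ t : Set (StoneCech X) × (Cstar X × Cstar X),
        Pk t.1 ∧ closure G ⊆ t.1 ∧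
        (∀ z : StoneCech X, z ∈ closure G ∨ z ∉ t.1 → eX t.2.1 z = eX t.2.2 z) ∧
        (j : ℝ) < |eY (φ t.2.1) q - eY (φ t.2.2) q| := by
    rintro G ⟨hGo, hGcl, hGfin⟩ j
    obtain ⟨G', ⟨hG'o, hG'cl, hG'fin⟩, hGG'⟩ := cover (closure G)
      (isClosed_closure.isCompact) hGcl
    set n := (aFn eX eY φ q (Set.univ : Set (StoneCech X))).toReal with hn
    set r := (aFn eX eY φ q G'ᶜ).toReal with hr
    obtain ⟨f, g, hadm, hbig⟩ := exists_pair_gt eX eY φ htop ((j:ℝ) + n + r + 1)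
    set D : C(StoneCech X, ℝ) := eX f - eX g with hD
    set T : Set (StoneCech X) := {z | 1 ≤ |D z|} with hT
    have hTclosed : IsClosed T := isClosed_le continuous_const D.continuous.abs
    have hTU : T ⊆ U := by
      intro z hz
      by_contra hzU
      have := hadm z hzU
      rw [show |eX f z - eX g z| = |D z| by simp [hD]] at this
      exact absurd this (not_lt.2 hz)
    obtain ⟨G1, ⟨hG1o, hG1cl, hG1fin⟩, hTG1⟩ := cover (T ∪ closure G')
      (hTclosed.isCompact.union isClosed_closure.isCompact) (Set.union_subset hTU hG'cl)
    have hdisj1 : Disjoint (G1ᶜ) T := by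
      rw [Set.disjoint_left]
      intro z hz hzT
      exact hz (hTG1 (Set.mem_union_left _ hzT))
    obtain ⟨lam, hlam0, hlam1, hlam01⟩ := exists_continuous_zero_one_of_isClosed
      hG1o.isClosed_compl hTclosed hdisj1
    have hdisj2 : Disjoint (closure G) (G'ᶜ) := by
      rw [Set.disjoint_left]
      intro z hz hz2
      exact hz2 (hGG' hz)
    obtain ⟨mu, hmu0, hmu1, hmu01⟩ := exists_continuous_zero_one_of_isClosed
      isClosed_closure hG'o.isClosed_compl hdisj2
    set Wc : C(StoneCech X, ℝ) := ⟨fun z => eX g z + (1 - lam z) * D z,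
      (eX g).continuous.add ((continuous_const.sub lam.continuous).mul D.continuous)⟩ with hWc
    set Uc : C(StoneCech X, ℝ) := ⟨fun z => Wc z + mu z * lam z * D z,
      Wc.continuous.add ((mu.continuous.mul lam.continuous).mul D.continuous)⟩ with hUc
    set w : Cstar X := restr Wc with hwdef
    set u : Cstar X := restr Uc with hudef
    have hw : eX w = Wc := eX_restr eX heX Wc
    have hu : eX u = Uc := eX_restr eX heX Uc
    -- (w, g) is globally admissible
    have hadm1 : ∀ z ∈ (Set.univ : Set (StoneCech X)), |eX w z - eX g z| < 1 := by
      intro z _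
      rw [hw]
      have hcalc : Wc z - eX g z = (1 - lam z) * D z := by
        simp only [hWc, ContinuousMap.coe_mk]; ring
      rw [hcalc]
      by_cases hzT : z ∈ T
      · have : lam z = 1 := hlam1 hzT
        rw [this]; simpa using one_pos
      · have hzD : |D z| < 1 := not_le.1 hzT
        have h01 := hlam01 z
        calc |(1 - lam z) * D z| = |1 - lam z| * |D z| := abs_mul _ _
          _ ≤ 1 * |D z| := by
              refine mul_le_mul_of_nonneg_right ?_ (abs_nonneg _)
              rw [abs_le]; constructor <;> [linarith [h01.2]; linarith [h01.1]]
          _ = |D z| := one_mul _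
          _ < 1 := hzD
    have hb1 : |eY (φ w) q - eY (φ g) q| ≤ n :=
      abs_le_of_aFn eX eY φ (lemmaA eX eY φ hφ heX heY hYpc q) hadm1
    -- (f, u) is admissible on G'ᶜ
    have hadm2 : ∀ z ∈ G'ᶜ, |eX f z - eX u z| < 1 := by
      intro z hz
      rw [hu]
      have hmu1' : mu z = 1 := hmu1 hz
      have hcalc : eX f z - Uc z = (1 - mu z) * (lam z * D z) := by
        simp only [hUc, hWc, hD, ContinuousMap.coe_mk, ContinuousMap.sub_apply]; ring
      rw [hcalc, hmu1']
      simpa using one_pos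
    have hb2 : |eY (φ f) q - eY (φ u) q| ≤ r :=
      abs_le_of_aFn eX eY φ hG'fin hadm2
    refine ⟨(G1, (u, w)), ⟨hG1o, hG1cl, hG1fin⟩, ?_, ?_, ?_⟩
    · exact hGG'.trans (subset_closure.trans
        ((Set.subset_union_right).trans hTG1))
    · intro z hz
      rw [hu, hw]
      have hcalc : Uc z = Wc z + mu z * lam z * D z := by
        simp only [hUc, ContinuousMap.coe_mk]
      rw [hcalc]
      rcases hz with hz | hz
      · have : mu z = 0 := hmu0 hz
        rw [this]; ring
      · have : lam z = 0 := hlam0 hz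
        rw [this]; ring
    · have htri : |eY (φ f) q - eY (φ g) q| ≤ |eY (φ f) q - eY (φ u) q|
          + |eY (φ u) q - eY (φ w) q| + |eY (φ w) q - eY (φ g) q| := by
        calc |eY (φ f) q - eY (φ g) q|
            ≤ |eY (φ f) q - eY (φ u) q| + |eY (φ u) q - eY (φ g) q| := abs_sub_le _ _ _
          _ ≤ |eY (φ f) q - eY (φ u) q| + (|eY (φ u) q - eY (φ w) q|
              + |eY (φ w) q - eY (φ g) q|) := by
                have := abs_sub_le (eY (φ u) q) (eY (φ w) q) (eY (φ g) q)
                linarith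
          _ = _ := by ring
      linarith
  -- base of the construction
  have hbase : Pk (∅ : Set (StoneCech X)) := by
    refine ⟨isOpen_empty, ?_, ?_⟩
    · rw [closure_empty]; exact Set.empty_subset _
    · rw [Set.compl_empty]; exact lemmaA eX eY φ hφ heX heY hYpc q
  -- the recursively constructed sequence
  let Stg : ℕ → {G : Set (StoneCech X) // Pk G} := fun n =>
    Nat.rec ⟨∅, hbase⟩ (fun j ih =>
      ⟨(step ih.1 ih.2 (j+1)).choose.1, (step ih.1 ih.2 (j+1)).choose_spec.1⟩) n
  let Gs : ℕ → Set (StoneCech X) := fun j => (Stg j).1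
  let pu : ℕ → Cstar X := fun j => (step (Stg j).1 (Stg j).2 (j+1)).choose.2.1
  let pw : ℕ → Cstar X := fun j => (step (Stg j).1 (Stg j).2 (j+1)).choose.2.2
  have hspec : ∀ j : ℕ, closure (Gs j) ⊆ Gs (j+1) ∧
      (∀ z : StoneCech X, z ∈ closure (Gs j) ∨ z ∉ Gs (j+1) →
        eX (pu j) z = eX (pw j) z) ∧
      ((j+1 : ℕ) : ℝ) < |eY (φ (pu j)) q - eY (φ (pw j)) q| := by
    intro j
    have h := (step (Stg j).1 (Stg j).2 (j+1)).choose_spec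
    exact ⟨h.2.1, h.2.2.1, by exact_mod_cast h.2.2.2⟩
  have hmono : ∀ i j : ℕ, i ≤ j → Gs i ⊆ Gs j := by
    intro i j hij
    induction hij with
    | refl => exact subset_rfl
    | step h ih => exact ih.trans (subset_closure.trans (hspec _).1)
  -- pairwise disjoint annuli
  let As : ℕ → Set (StoneCech X) := fun j => Gs (j+1) \ closure (Gs j)
  have hdisjA : ∀ i j : ℕ, i < j → Disjoint (As i) (As j) := by
    intro i j hij
    rw [Set.disjoint_left]
    rintro z ⟨hz1, -⟩ ⟨-, hz2⟩
    exact hz2 (subset_closure (hmono (i+1) j hij hz1))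
  -- transfer to a point of Y
  let A := ⋂ j : ℕ, {q' : StoneCech Y |
    ((j+1 : ℕ):ℝ) < |eY (φ (pu j)) q' - eY (φ (pw j)) q'|}
  have hAgδ : IsGδ A := IsGδ.iInter_of_isOpen fun j =>
    isOpen_lt continuous_const ((eY (φ (pu j))).continuous.sub (eY (φ (pw j))).continuous).abs
  have hqA : q ∈ A := Set.mem_iInter.2 fun j => (hspec j).2.2
  obtain ⟨y₀, hy₀⟩ := gdelta_dense hYpc hAgδ ⟨q, hqA⟩
  obtain ⟨F, δ, hδ, huc⟩ := uc_point φ hφ y₀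
  let J : Set ℕ := {j | ∃ x ∈ F, stoneCechUnit x ∈ As j}
  have hJfin : J.Finite := by
    have hsub : J ⊆ ⋃ x ∈ F, {j : ℕ | stoneCechUnit x ∈ As j} := by
      rintro j ⟨x, hxF, hx⟩
      exact Set.mem_biUnion hxF hx
    refine Set.Finite.subset (Set.Finite.biUnion F.finite_toSet fun x _ => ?_) hsub
    refine Set.Subsingleton.finite fun j1 h1 j2 h2 => ?_
    by_contra hne
    rcases lt_or_gt_of_ne hne with h | h
    · exact Set.disjoint_left.1 (hdisjA j1 j2 h) h1 h2
    · exact Set.disjoint_left.1 (hdisjA j2 j1 h) h2 h1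
  obtain ⟨j, hjJ⟩ := (hJfin.infinite_compl).nonempty
  have heq : ∀ x ∈ F, (pu j).1 x = (pw j).1 x := by
    intro x hxF
    have hxA : stoneCechUnit x ∉ As j := fun hmem => hjJ ⟨x, hxF, hmem⟩
    have hor : stoneCechUnit x ∈ closure (Gs j) ∨ stoneCechUnit x ∉ Gs (j+1) := by
      by_contra hcc
      push_neg at hcc
      exact hxA ⟨hcc.2, hcc.1⟩
    have := (hspec j).2.1 _ hor
    rw [heX, heX] at this
    exact this
  have hlt1 : |(φ (pu j)).1 y₀ - (φ (pw j)).1 y₀| < 1 := by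
    refine huc _ _ fun x hx => ?_
    rw [heq x hx, sub_self, abs_zero]
    exact hδ
  have hbig' : ((j+1:ℕ):ℝ) < |eY (φ (pu j)) (stoneCechUnit y₀)
      - eY (φ (pw j)) (stoneCechUnit y₀)| := Set.mem_iInter.1 hy₀ j
  rw [heY, heY] at hbig'
  push_cast at hbig'
  linarith

end Aux

/-- If `φ : C*_p(X) → C*_p(Y)` is a uniformly continuous surjection and `Y` is
pseudocompact, then for every open `U ⊆ βX` the set
`K⁻¹(U) = { y ∈ βY : K(y) ∩ U ≠ ∅ }` is a `Gδ`-subset of `βY`, where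
`K(y) = ⋂ { K ⊆ βX compact : a(y,K) < ∞ }`. -/
theorem Kpreimage_isGdelta
    {X Y : Type*} [TopologicalSpace X] [T35Space X] [TopologicalSpace Y] [T35Space Y]
    (φ : Cstar X → Cstar Y) (hφ : UniformContinuous φ) (hsurj : Function.Surjective φ)
    (eX : Cstar X → C(StoneCech X, ℝ)) (heX : ∀ f x, eX f (stoneCechUnit x) = f.1 x)
    (eY : Cstar Y → C(StoneCech Y, ℝ)) (heY : ∀ g y, eY g (stoneCechUnit y) = g.1 y)
    (hYpc : ∀ f : Y → ℝ, Continuous f → ∃ M : ℝ, ∀ y, |f y| ≤ M)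
    (U : Set (StoneCech X)) (hU : IsOpen U) :
    IsGδ {y : StoneCech Y |
      ((⋂₀ {K : Set (StoneCech X) | IsCompact K ∧ aFn eX eY φ y K < ⊤}) ∩ U).Nonempty} := by
  have hset : {y : StoneCech Y |
      ((⋂₀ {K : Set (StoneCech X) | IsCompact K ∧ aFn eX eY φ y K < ⊤}) ∩ U).Nonempty}
      = ⋂ m : ℕ, {q : StoneCech Y | (m : ℝ≥0∞) < aFn eX eY φ q Uᶜ} := by
    ext q
    simp only [Set.mem_setOf_eq, Set.mem_iInter]
    constructor
    · rintro ⟨x, hxS, hxU⟩ m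
      by_contra hm
      push_neg at hm
      have hfin : aFn eX eY φ q Uᶜ < ⊤ := lt_of_le_of_lt hm (ENNReal.natCast_lt_top m)
      have : x ∈ Uᶜ := hxS _ ⟨hU.isClosed_compl.isCompact, hfin⟩
      exact this hxU
    · intro hm
      have htop : aFn eX eY φ q Uᶜ = ⊤ := by
        by_contra hne
        obtain ⟨m, hm'⟩ := ENNReal.exists_nat_gt hne
        exact absurd (hm m) (not_lt.2 hm'.le)
      obtain ⟨x, hxU, hess⟩ := exists_essential eX eY φ hφ heX heY hYpc hU q htop
      refine ⟨x, ?_, hxU⟩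
      intro K hK
      by_contra hxK
      have hKc : IsOpen Kᶜ := (hK.1.isClosed).isOpen_compl
      have := hess Kᶜ hKc hxK
      rw [compl_compl] at this
      exact absurd hK.2 (by rw [this]; exact lt_irrefl _)
  rw [hset]
  refine IsGδ.iInter_of_isOpen fun m => ?_
  have : {q : StoneCech Y | (m : ℝ≥0∞) < aFn eX eY φ q Uᶜ}
      = ⋃ (f : Cstar X) (g : Cstar X)
          (_ : ∀ z ∈ Uᶜ, |eX f z - eX g z| < 1),
          {q : StoneCech Y | (m : ℝ) < |eY (φ f) q - eY (φ g) q|} := by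
    ext q
    simp only [Set.mem_setOf_eq, Set.mem_iUnion]
    constructor
    · intro h
      rw [aFn, lt_iSup_iff] at h
      obtain ⟨p, hp⟩ := h
      by_cases hadm : ∀ z ∈ Uᶜ, |eX p.1 z - eX p.2 z| < 1
      · refine ⟨p.1, p.2, hadm, ?_⟩
        rw [iSup_pos hadm] at hp
        have := (ENNReal.lt_ofReal_iff_toReal_lt (by simp)).1 hp
        rwa [ENNReal.toReal_natCast] at this
      · rw [iSup_neg hadm] at hp
        exact absurd hp (by simp)
    · rintro ⟨f, g, hadm, h⟩
      refine lt_of_lt_of_le ?_ (le_aFn eX eY φ hadm)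
      rw [← ENNReal.ofReal_natCast]
      exact (ENNReal.ofReal_lt_ofReal_iff_of_nonneg (Nat.cast_nonneg m)).2 h
  rw [this]
  refine isOpen_iUnion fun f => isOpen_iUnion fun g => isOpen_iUnion fun _ => ?_
  exact isOpen_lt continuous_const (by continuity)
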